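/- Let X ⊆ ℝ^d be a compact convex set with 0 ∉ X. Then the conical hull cone(X) = {λx : x ∈ X, λ > 0} is Capra-convex, for any choice of source norm. -/

import Mathlib

open Classical in
noncomputable def radProj {d : ℕ} (N : EuclideanSpace ℝ (Fin d) → ℝ)
    (x : EuclideanSpace ℝ (Fin d)) : EuclideanSpace ℝ (Fin d) :=
  if x = 0 then 0 else (N x)⁻¹ • x

noncomputable def capraConj {d : ℕ} (N : EuclideanSpace ℝ (Fin d) → ℝ)
    (f : EuclideanSpace ℝ (Fin d) → EReal) (y : EuclideanSpace ℝ (Fin d)) : EReal :=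
  ⨆ x : EuclideanSpace ℝ (Fin d), ((inner ℝ (radProj N x) y : ℝ) : EReal) - f x

noncomputable def capraBiconj {d : ℕ} (N : EuclideanSpace ℝ (Fin d) → ℝ)
    (f : EuclideanSpace ℝ (Fin d) → EReal) (x : EuclideanSpace ℝ (Fin d)) : EReal :=
  ⨆ y : EuclideanSpace ℝ (Fin d), ((inner ℝ (radProj N x) y : ℝ) : EReal) - capraConj N f y

open Classical in
noncomputable def ind {d : ℕ} (X : Set (EuclideanSpace ℝ (Fin d)))
    (x : EuclideanSpace ℝ (Fin d)) : EReal :=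
  if x ∈ X then 0 else ⊤

def IsCapraConvex {d : ℕ} (N : EuclideanSpace ℝ (Fin d) → ℝ)
    (X : Set (EuclideanSpace ℝ (Fin d))) : Prop :=
  ind X = capraBiconj N (ind X)

def coneHull {d : ℕ} (A : Set (EuclideanSpace ℝ (Fin d))) : Set (EuclideanSpace ℝ (Fin d)) :=
  {y | ∃ a ∈ A, ∃ l : ℝ, 0 < l ∧ y = l • a}

/-! The Capra conjugate of `ind C` is the support function of `ρ(C)`, so by Hahn–Banach separation
the Capra biconjugate of `ind C` is the indicator of `ρ⁻¹(cl conv ρ(C))`: the set `C` is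
Capra-convex iff `ρ(x) ∈ cl conv ρ(C)` forces `x ∈ C`. For `C = cone(X)` we have
`ρ(C) = ρ(X) ⊆ [r, R] • X` for some `0 < r`, and `[r, R] • X` is a compact convex subset of `C`,
so `cl conv ρ(C) ⊆ C`. Since `C` is a cone avoiding `0`, `ρ(x) ∈ C` gives `x = ‖x‖ ρ(x) ∈ C`. -/

open Set
open scoped Pointwise RealInnerProductSpace

lemma Seminorm.continuous_of_finiteDimensional {E : Type*} [NormedAddCommGroup E]
    [NormedSpace ℝ E] [FiniteDimensional ℝ E] (p : Seminorm ℝ E) : Continuous p :=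
  continuousOn_univ.1 (p.convexOn.continuousOn isOpen_univ)

lemma Convex.smul_of_subset_Ioi {𝕜 E : Type*} [Field 𝕜] [LinearOrder 𝕜] [IsStrictOrderedRing 𝕜]
    [AddCommGroup E] [Module 𝕜 E] {s : Set 𝕜} {t : Set E} (hs : Convex 𝕜 s) (hs0 : s ⊆ Ioi 0)
    (ht : Convex 𝕜 t) : Convex 𝕜 (s • t) := by
  rintro _ ⟨μ, hμ, a, ha, rfl⟩ _ ⟨ν, hν, b, hb, rfl⟩ α β hα hβ hαβ
  have hw : α • μ + β • ν ∈ s := hs hμ hν hα hβ hαβ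
  have hw0 : 0 < α * μ + β * ν := hs0 hw
  -- `α • μ • a + β • ν • b = (αμ + βν) • ((αμ / (αμ + βν)) • a + (βν / (αμ + βν)) • b)`
  refine ⟨_, hw, _, convex_iff_div.1 ht ha hb
    (mul_nonneg hα (hs0 hμ).le) (mul_nonneg hβ (hs0 hν).le) hw0, ?_⟩
  simp only [smul_add, smul_smul, smul_eq_mul]
  congr 2 <;> field_simp

section SupportFunction

variable {E : Type*} [NormedAddCommGroup E] [InnerProductSpace ℝ E]

noncomputable def eSupportFun (S : Set E) (y : E) : EReal := ⨆ s ∈ S, ((⟪s, y⟫ : ℝ) : EReal)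

lemma eSupportFun_zero {S : Set E} (hS : S.Nonempty) : eSupportFun S 0 = 0 := by
  simp only [eSupportFun, inner_zero_right, EReal.coe_zero]
  exact biSup_const hS

lemma inner_le_eSupportFun_of_mem {S : Set E} {z : E} (hz : z ∈ closure (convexHull ℝ S))
    (y : E) :
    ((⟪z, y⟫ : ℝ) : EReal) ≤ eSupportFun S y := by
  refine EReal.le_of_forall_lt_iff_le.1 fun c hc => ?_
  have hH : closure (convexHull ℝ S) ⊆ {w | ⟪w, y⟫ ≤ c} := by
    refine closure_minimal (convexHull_min (fun s hs => ?_) ?_) ?_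
    · exact EReal.coe_le_coe_iff.1 ((le_biSup (fun s => ((⟪s, y⟫ : ℝ) : EReal)) hs).trans hc.le)
    · exact convex_halfSpace_le (innerₛₗ ℝ |>.flip y).isLinear c
    · exact isClosed_le (continuous_id.inner continuous_const) continuous_const
  exact EReal.coe_le_coe_iff.2 (hH hz)

lemma iSup_inner_sub_eSupportFun_of_mem {S : Set E} {z : E}
    (hz : z ∈ closure (convexHull ℝ S)) :
    ⨆ y, ((⟪z, y⟫ : ℝ) : EReal) - eSupportFun S y = 0 := by
  have hS : S.Nonempty := convexHull_nonempty_iff.1 (closure_nonempty_iff.1 ⟨z, hz⟩)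
  refine le_antisymm (iSup_le fun y => EReal.sub_nonpos.2 (inner_le_eSupportFun_of_mem hz y)) ?_
  calc (0 : EReal) = ((⟪z, 0⟫ : ℝ) : EReal) - eSupportFun S 0 := by
        simp [eSupportFun_zero hS]
    _ ≤ _ := le_iSup (fun y => ((⟪z, y⟫ : ℝ) : EReal) - eSupportFun S y) 0

lemma iSup_inner_sub_eSupportFun_of_notMem [CompleteSpace E] {S : Set E} {z : E}
    (hz : z ∉ closure (convexHull ℝ S)) :
    ⨆ y, ((⟪z, y⟫ : ℝ) : EReal) - eSupportFun S y = ⊤ := by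
  obtain ⟨f, u, hfS, hfz⟩ :=
    geometric_hahn_banach_closed_point (convex_convexHull ℝ S).closure isClosed_closure hz
  set v := (InnerProductSpace.toDual ℝ E).symm f
  have hv : ∀ w, ⟪w, v⟫ = f w := fun w => by
    rw [real_inner_comm]; exact InnerProductSpace.toDual_symm_apply
  rw [EReal.eq_top_iff_forall_lt]
  intro r
  set t := (|r| + 1) / (f z - u)
  have ht : 0 < t := div_pos (by positivity) (sub_pos.2 hfz)
  have hσ : eSupportFun S (t • v) ≤ ((t * u : ℝ) : EReal) := by
    refine iSup₂_le fun s hs => EReal.coe_le_coe_iff.2 ?_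
    rw [inner_smul_right, hv]
    exact mul_le_mul_of_nonneg_left (hfS s (subset_closure (subset_convexHull ℝ S hs))).le ht.le
  have hr : r < t * f z - t * u := by
    have : t * f z - t * u = |r| + 1 := by
      rw [← mul_sub, div_mul_cancel₀ _ (sub_pos.2 hfz).ne']
    linarith [le_abs_self r]
  calc (r : EReal) < ((t * f z : ℝ) : EReal) - ((t * u : ℝ) : EReal) := by
        exact_mod_cast hr
    _ ≤ ((⟪z, t • v⟫ : ℝ) : EReal) - eSupportFun S (t • v) := by
        rw [inner_smul_right, hv]; exact EReal.sub_le_sub le_rfl hσ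
    _ ≤ _ := le_iSup (fun y => ((⟪z, y⟫ : ℝ) : EReal) - eSupportFun S y) (t • v)

end SupportFunction

section Capra

variable {d : ℕ}

lemma capraConj_ind (N : EuclideanSpace ℝ (Fin d) → ℝ) (C : Set (EuclideanSpace ℝ (Fin d))) :
    capraConj N (ind C) = eSupportFun (radProj N '' C) := by
  funext y
  rw [capraConj, eSupportFun, iSup_image]
  congr 1
  funext x
  by_cases hx : x ∈ C <;> simp [ind, hx]

lemma capraBiconj_ind (N : EuclideanSpace ℝ (Fin d) → ℝ) (C : Set (EuclideanSpace ℝ (Fin d))) :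
    capraBiconj N (ind C) = ind (radProj N ⁻¹' closure (convexHull ℝ (radProj N '' C))) := by
  funext x
  rw [capraBiconj, capraConj_ind]
  by_cases hx : radProj N x ∈ closure (convexHull ℝ (radProj N '' C))
  · rw [iSup_inner_sub_eSupportFun_of_mem hx, ind, if_pos (mem_preimage.2 hx)]
  · rw [iSup_inner_sub_eSupportFun_of_notMem hx, ind, if_neg (mt mem_preimage.1 hx)]

lemma isCapraConvex_iff (N : EuclideanSpace ℝ (Fin d) → ℝ) (C : Set (EuclideanSpace ℝ (Fin d))) :
    IsCapraConvex N C ↔ radProj N ⁻¹' closure (convexHull ℝ (radProj N '' C)) ⊆ C := by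
  have hC : C ⊆ radProj N ⁻¹' closure (convexHull ℝ (radProj N '' C)) := fun x hx =>
    subset_closure (subset_convexHull ℝ _ (mem_image_of_mem _ hx))
  rw [IsCapraConvex, capraBiconj_ind]
  constructor
  · intro h x hx
    by_contra hxC
    simpa [ind, hx, hxC] using congrFun h x
  · intro h
    rw [Subset.antisymm h hC]

end Capra

section Cone

variable {d : ℕ}

lemma coneHull_eq_Ioi_smul (X : Set (EuclideanSpace ℝ (Fin d))) :
    coneHull X = Ioi (0 : ℝ) • X := by
  ext y
  simp only [coneHull, mem_ofPred_eq, mem_smul, mem_Ioi]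
  constructor
  · rintro ⟨a, ha, l, hl, rfl⟩; exact ⟨l, hl, a, ha, rfl⟩
  · rintro ⟨l, hl, a, ha, rfl⟩; exact ⟨a, ha, l, hl, rfl⟩

lemma smul_mem_coneHull {X : Set (EuclideanSpace ℝ (Fin d))} {l : ℝ} {y : EuclideanSpace ℝ (Fin d)}
    (hl : 0 < l) (hy : y ∈ coneHull X) : l • y ∈ coneHull X := by
  obtain ⟨a, ha, m, hm, rfl⟩ := hy
  exact ⟨a, ha, l * m, mul_pos hl hm, smul_smul l m a⟩

lemma zero_notMem_coneHull {X : Set (EuclideanSpace ℝ (Fin d))} (h0 : 0 ∉ X) :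
    0 ∉ coneHull X := by
  rintro ⟨a, ha, l, hl, hla⟩
  exact h0 ((smul_eq_zero.1 hla.symm).resolve_left hl.ne' ▸ ha)

variable (p : Seminorm ℝ (EuclideanSpace ℝ (Fin d)))

lemma radProj_smul_of_pos {l : ℝ} (hl : 0 < l) (x : EuclideanSpace ℝ (Fin d)) :
    radProj p (l • x) = radProj p x := by
  rcases eq_or_ne x 0 with rfl | hx
  · simp
  · rw [radProj, radProj, if_neg (smul_ne_zero hl.ne' hx), if_neg hx, map_smul_eq_mul,
      Real.norm_of_nonneg hl.le, smul_smul]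
    congr 1
    field_simp

lemma image_radProj_coneHull (X : Set (EuclideanSpace ℝ (Fin d))) :
    radProj p '' coneHull X = radProj p '' X := by
  ext z
  constructor
  · rintro ⟨_, ⟨a, ha, l, hl, rfl⟩, rfl⟩
    exact ⟨a, ha, (radProj_smul_of_pos p hl a).symm⟩
  · rintro ⟨a, ha, rfl⟩
    exact ⟨a, ⟨a, ha, 1, one_pos, (one_smul ℝ a).symm⟩, rfl⟩

variable {p}

lemma smul_radProj_self (hp : ∀ x, p x = 0 → x = 0) (x : EuclideanSpace ℝ (Fin d)) :
    p x • radProj p x = x := by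
  rcases eq_or_ne x 0 with rfl | hx
  · simp
  · rw [radProj, if_neg hx, smul_smul, mul_inv_cancel₀ (mt (hp x) hx), one_smul]

lemma mem_coneHull_of_radProj_mem (hp : ∀ x, p x = 0 → x = 0)
    {X : Set (EuclideanSpace ℝ (Fin d))} (h0 : 0 ∉ X) {x : EuclideanSpace ℝ (Fin d)}
    (hx : radProj p x ∈ coneHull X) : x ∈ coneHull X := by
  have hx0 : x ≠ 0 := by
    rintro rfl
    exact zero_notMem_coneHull h0 (by simpa [radProj] using hx)
  rw [← smul_radProj_self hp x]
  exact smul_mem_coneHull ((apply_nonneg p x).lt_of_ne' (mt (hp x) hx0)) hx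

lemma exists_radProj_image_subset_Icc_smul (hp : ∀ x, p x = 0 → x = 0)
    {X : Set (EuclideanSpace ℝ (Fin d))} (hX : IsCompact X) (h0 : 0 ∉ X) :
    ∃ r R : ℝ, 0 < r ∧ radProj p '' X ⊆ Icc r R • X := by
  have hX0 : ∀ a ∈ X, a ≠ 0 := fun a ha h => h0 (h ▸ ha)
  have hpos : ∀ a ∈ X, 0 < p a := fun a ha => (apply_nonneg p a).lt_of_ne' (mt (hp a) (hX0 a ha))
  obtain ⟨M, hM⟩ := (hX.image p.continuous_of_finiteDimensional).bddAbove
  obtain ⟨R, hR⟩ := (hX.image_of_continuousOn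
    ((p.continuous_of_finiteDimensional.continuousOn).inv₀ fun a ha => (hpos a ha).ne')).bddAbove
  refine ⟨(max M 1)⁻¹, R, by positivity, ?_⟩
  rintro _ ⟨a, ha, rfl⟩
  refine ⟨(p a)⁻¹, ⟨?_, hR (mem_image_of_mem _ ha)⟩, a, ha, (if_neg (hX0 a ha)).symm⟩
  exact inv_anti₀ (hpos a ha) ((hM (mem_image_of_mem _ ha)).trans (le_max_left M 1))

lemma closure_convexHull_radProj_image_subset_coneHull (hp : ∀ x, p x = 0 → x = 0)
    {X : Set (EuclideanSpace ℝ (Fin d))} (hX : IsCompact X) (hXconv : Convex ℝ X) (h0 : 0 ∉ X) :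
    closure (convexHull ℝ (radProj p '' X)) ⊆ coneHull X := by
  obtain ⟨r, R, hr, hρX⟩ := exists_radProj_image_subset_Icc_smul hp hX h0
  have hIcc : Icc r R ⊆ Ioi 0 := fun l hl => hr.trans_le hl.1
  have hclosed : IsClosed (Icc r R • X) := (isCompact_Icc.smul_set hX).isClosed
  refine (closure_minimal (convexHull_min hρX ?_) hclosed).trans ?_
  · exact (convex_Icc r R).smul_of_subset_Ioi hIcc hXconv
  · rw [coneHull_eq_Ioi_smul]
    exact smul_subset_smul_right hIcc

end Cone

theorem stmt {d : ℕ} (N : EuclideanSpace ℝ (Fin d) → ℝ)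
    (hN0 : ∀ x : EuclideanSpace ℝ (Fin d), N x = 0 ↔ x = 0)
    (hNh : ∀ (a : ℝ) (x : EuclideanSpace ℝ (Fin d)), N (a • x) = |a| * N x)
    (hNt : ∀ x y : EuclideanSpace ℝ (Fin d), N (x + y) ≤ N x + N y)
    (X : Set (EuclideanSpace ℝ (Fin d))) (hX : IsCompact X) (hXconv : Convex ℝ X)
    (h0 : (0 : EuclideanSpace ℝ (Fin d)) ∉ X) :
    IsCapraConvex N (coneHull X) := by
  obtain ⟨p, rfl⟩ : ∃ p : Seminorm ℝ (EuclideanSpace ℝ (Fin d)), ⇑p = N :=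
    ⟨Seminorm.of N hNt fun a x => by rw [hNh, Real.norm_eq_abs], rfl⟩
  have hp : ∀ x, p x = 0 → x = 0 := fun x => (hN0 x).1
  rw [isCapraConvex_iff, image_radProj_coneHull]
  exact fun x hx => mem_coneHull_of_radProj_mem hp h0
    (closure_convexHull_radProj_image_subset_coneHull hp hX hXconv h0 hx)
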